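/- Let F be a formula in unit chain expansion. Then ¬F reduces via the ¬- and ⋗-rewrite rules to recursiveReduce(F), and recursiveReduce(F) is the unique unit-chain-expansion reduct of ¬F. -/

import Mathlib

/-- Atomic symbols: literals from `A` together with ⊤ and ⊥. -/
inductive Atom (A : Type) : Type where
  | lit : A → Atom A
  | top : Atom A
  | bot : Atom A

/-- Complement on atoms, induced by a complement map `c` on literals. -/
def Atom.compl {A : Type} (c : A → A) : Atom A → Atom A
  | .lit a => .lit (c a)
  | .top => .bot
  | .bot => .top

/-- Formulas of gradual classical logic. `grad` is the connective ⋗. -/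
inductive Fm (A : Type) : Type where
  | atom : Atom A → Fm A
  | and : Fm A → Fm A → Fm A
  | or : Fm A → Fm A → Fm A
  | neg : Fm A → Fm A
  | grad : Fm A → Fm A → Fm A

/-- One-step rewriting using only the five ⋗-rules (with congruence closure). -/
inductive GStep {A : Type} : Fm A → Fm A → Prop where
  | gradAssoc (F G H) : GStep (.grad (.grad F G) H)
      (.and (.grad F H) (.or (.grad F G) (.grad F (.grad G H))))
  | gradAndL (F G H) : GStep (.grad (.and F G) H) (.and (.grad F H) (.grad G H))
  | gradOrL (F G H) : GStep (.grad (.or F G) H) (.or (.grad F H) (.grad G H))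
  | gradAndR (F G H) : GStep (.grad F (.and G H)) (.and (.grad F G) (.grad F H))
  | gradOrR (F G H) : GStep (.grad F (.or G H)) (.or (.grad F G) (.grad F H))
  | andL {F F'} (G) : GStep F F' → GStep (.and F G) (.and F' G)
  | andR (F) {G G'} : GStep G G' → GStep (.and F G) (.and F G')
  | orL {F F'} (G) : GStep F F' → GStep (.or F G) (.or F' G)
  | orR (F) {G G'} : GStep G G' → GStep (.or F G) (.or F G')
  | negC {F F'} : GStep F F' → GStep (.neg F) (.neg F')
  | gradL {F F'} (G) : GStep F F' → GStep (.grad F G) (.grad F' G)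
  | gradR (F) {G G'} : GStep G G' → GStep (.grad F G) (.grad F G')

/-- One-step rewriting with both the ¬-rules and the ⋗-rules (congruence closure). -/
inductive Step {A : Type} (c : A → A) : Fm A → Fm A → Prop where
  | negAtom (s) : Step c (.neg (.atom s)) (.atom (s.compl c))
  | negAnd (F G) : Step c (.neg (.and F G)) (.or (.neg F) (.neg G))
  | negOr (F G) : Step c (.neg (.or F G)) (.and (.neg F) (.neg G))
  | negGrad (s F) : Step c (.neg (.grad (.atom s) F))
      (.or (.atom (s.compl c)) (.grad (.atom s) (.neg F)))
  | gradAssoc (F G H) : Step c (.grad (.grad F G) H)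
      (.and (.grad F H) (.or (.grad F G) (.grad F (.grad G H))))
  | gradAndL (F G H) : Step c (.grad (.and F G) H) (.and (.grad F H) (.grad G H))
  | gradOrL (F G H) : Step c (.grad (.or F G) H) (.or (.grad F H) (.grad G H))
  | gradAndR (F G H) : Step c (.grad F (.and G H)) (.and (.grad F G) (.grad F H))
  | gradOrR (F G H) : Step c (.grad F (.or G H)) (.or (.grad F G) (.grad F H))
  | andL {F F'} (G) : Step c F F' → Step c (.and F G) (.and F' G)
  | andR (F) {G G'} : Step c G G' → Step c (.and F G) (.and F G')
  | orL {F F'} (G) : Step c F F' → Step c (.or F G) (.or F' G)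
  | orR (F) {G G'} : Step c G G' → Step c (.or F G) (.or F G')
  | negC {F F'} : Step c F F' → Step c (.neg F) (.neg F')
  | gradL {F F'} (G) : Step c F F' → Step c (.grad F G) (.grad F' G)
  | gradR (F) {G G'} : Step c G G' → Step c (.grad F G) (.grad F G')

/-- Reduction: reflexive-transitive closure of one-step rewriting (all rules). -/
def Red {A : Type} (c : A → A) : Fm A → Fm A → Prop :=
  Relation.ReflTransGen (Step c)

/-- Reduction using only the ⋗-rules. -/
def GRed {A : Type} : Fm A → Fm A → Prop :=
  Relation.ReflTransGen GStep

/-- Unit chains (possibly of length one, i.e. a single atom): s₀⋗s₁⋗⋯⋗s_k. -/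
inductive UnitTail {A : Type} : Fm A → Prop where
  | atom (s : Atom A) : UnitTail (.atom s)
  | grad (s : Atom A) {F : Fm A} : UnitTail F → UnitTail (.grad (.atom s) F)

/-- Formulas in unit chain expansion: built from atoms and unit chains via ∧ and ∨;
in particular no ¬ occurs and every ⋗ lies in a unit chain of atoms. -/
inductive UCE {A : Type} : Fm A → Prop where
  | atom (s : Atom A) : UCE (.atom s)
  | and {F G : Fm A} : UCE F → UCE G → UCE (.and F G)
  | or {F G : Fm A} : UCE F → UCE G → UCE (.or F G)
  | chain (s : Atom A) {F : Fm A} : UnitTail F → UCE (.grad (.atom s) F)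

/-- Negation-free formulas. -/
inductive NegFree {A : Type} : Fm A → Prop where
  | atom (s : Atom A) : NegFree (.atom s)
  | and {F G : Fm A} : NegFree F → NegFree G → NegFree (.and F G)
  | or {F G : Fm A} : NegFree F → NegFree G → NegFree (.or F G)
  | grad {F G : Fm A} : NegFree F → NegFree G → NegFree (.grad F G)

/-- A valuation frame: a local interpretation `I` on prefix-sequences and atoms,
subject to the conditions of gradual classical logic.  The global interpretation `J`
is determined by `I` (see `GFrame.valAux`). -/
structure GFrame (A : Type) (c : A → A) : Type where
  I : List (Atom A) → Atom A → Bool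
  I_top : ∀ ψ, I ψ .top = true
  I_bot : ∀ ψ, I ψ .bot = false
  I_compl : ∀ ψ (a : A), (I ψ (.lit a) = false ↔ I ψ (.lit (c a)) = true)
  I_sync : ∀ ψ ψ' s, ψ.length = ψ'.length → I ψ s = I ψ' s

/-- Valuation relative to a prefix ψ.  On a unit chain s₀⋗⋯⋗s_k (with prefix ε)
this computes the global interpretation J(s₀…s_k) = 1 iff every local step is 1;
∧ and ∨ are Boolean. -/
def GFrame.valAux {A : Type} {c : A → A} (M : GFrame A c) :
    List (Atom A) → Fm A → Bool
  | ψ, .atom s => M.I ψ s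
  | ψ, .and F G => M.valAux ψ F && M.valAux ψ G
  | ψ, .or F G => M.valAux ψ F || M.valAux ψ G
  | ψ, .neg F => !(M.valAux ψ F)
  | ψ, .grad (.atom s) G => M.I ψ s && M.valAux (ψ ++ [s]) G
  | _, .grad _ _ => false

/-- The valuation [M ⊨ F]. -/
def GFrame.val {A : Type} {c : A → A} (M : GFrame A c) (F : Fm A) : Bool :=
  M.valAux [] F

/-- Push `s ⋗ ·` through ∧ and ∨ (normalization step of `recursiveReduce`). -/
def gradDist {A : Type} (s : Atom A) : Fm A → Fm A
  | .and F G => .and (gradDist s F) (gradDist s G)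
  | .or F G => .or (gradDist s F) (gradDist s G)
  | F => .grad (.atom s) F

/-- `recursiveReduce`: swap ∧/∨, complement non-chain atoms, and replace a chain
with head s and tail T by s^c ∨ (s ⋗ recursiveReduce T), normalized into unit
chain expansion.  On a unit chain s₀⋗⋯⋗s_k it yields
s₀^c ∨ (s₀⋗s₁^c) ∨ ⋯ ∨ (s₀⋗⋯⋗s_{k−1}⋗s_k^c). -/
def recursiveReduce {A : Type} (c : A → A) : Fm A → Fm A
  | .atom s => .atom (s.compl c)
  | .and F G => .or (recursiveReduce c F) (recursiveReduce c G)
  | .or F G => .and (recursiveReduce c F) (recursiveReduce c G)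
  | .neg F => .neg (recursiveReduce c F)
  | .grad (.atom s) G => .or (.atom (s.compl c)) (gradDist s (recursiveReduce c G))
  | .grad F G => .grad (recursiveReduce c F) (recursiveReduce c G)

/-! The map `Fm.nf` evaluates every pending negation `¬G` to `recursiveReduce c G` and pushes
`s ⋗ ·` through `∧` and `∨`. Every formula reachable from `¬F`, for `F` in unit chain expansion,
is built from atoms, `∧`, `∨`, `s ⋗ ·` and negations of formulas in unit chain expansion (so no
⋗-rule with a compound left argument ever applies), and each rewrite step leaves `nf` unchanged.
Since `nf (¬F) = recursiveReduce c F` and `nf` is the identity on formulas in unit chain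
expansion, every such reduct of `¬F` equals `recursiveReduce c F`. -/

variable {A : Type} {c : A → A}

theorem UnitTail.uce {T : Fm A} (h : UnitTail T) : UCE T := by
  cases h with
  | atom s => exact .atom s
  | grad s h => exact .chain s h

theorem gradDist_of_unitTail (s : Atom A) {T : Fm A} (h : UnitTail T) :
    gradDist s T = .grad (.atom s) T := by
  cases h <;> rfl

theorem Red.and {F F' G G' : Fm A} (hF : Red c F F') (hG : Red c G G') :
    Red c (.and F G) (.and F' G') :=
  (hF.lift (Fm.and · G) fun _ _ => .andL G).trans (hG.lift (Fm.and F' ·) fun _ _ => .andR F')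

theorem Red.or {F F' G G' : Fm A} (hF : Red c F F') (hG : Red c G G') :
    Red c (.or F G) (.or F' G') :=
  (hF.lift (Fm.or · G) fun _ _ => .orL G).trans (hG.lift (Fm.or F' ·) fun _ _ => .orR F')

theorem Red.gradR (s : Atom A) {G G' : Fm A} (hG : Red c G G') :
    Red c (.grad (.atom s) G) (.grad (.atom s) G') :=
  hG.lift (Fm.grad (.atom s)) fun _ _ => .gradR (.atom s)

theorem red_grad_gradDist (s : Atom A) : ∀ G : Fm A, Red c (.grad (.atom s) G) (gradDist s G)
  | .and F G => .head (.gradAndR _ _ _) ((red_grad_gradDist s F).and (red_grad_gradDist s G))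
  | .or F G => .head (.gradOrR _ _ _) ((red_grad_gradDist s F).or (red_grad_gradDist s G))
  | .atom _ | .neg _ | .grad _ _ => .refl

theorem UCE.red_neg_recursiveReduce {F : Fm A} (h : UCE F) :
    Red c (.neg F) (recursiveReduce c F) := by
  induction F with
  | atom s => exact .single (.negAtom s)
  | and F G ihF ihG => cases h with | and hF hG => exact .head (.negAnd _ _) ((ihF hF).or (ihG hG))
  | or F G ihF ihG => cases h with | or hF hG => exact .head (.negOr _ _) ((ihF hF).and (ihG hG))
  | neg => cases h
  | grad _ T _ ihT =>
    cases h with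
    | chain s hT =>
      exact .head (.negGrad s T)
        (Red.or .refl (((ihT hT.uce).gradR s).trans (red_grad_gradDist s _)))

theorem UCE.not_step {F G : Fm A} (h : UCE F) (hs : Step c F G) : False := by
  induction hs with
  | andL _ _ ih => cases h with | and hF _ => exact ih hF
  | andR _ _ ih => cases h with | and _ hG => exact ih hG
  | orL _ _ ih => cases h with | or hF _ => exact ih hF
  | orR _ _ ih => cases h with | or _ hG => exact ih hG
  | gradL _ _ ih => cases h with | chain s _ => exact ih (.atom s)
  | gradR _ _ ih => cases h with | chain _ hT => exact ih hT.uce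
  | _ => cases h <;> cases ‹UnitTail _›

def Fm.nf (c : A → A) : Fm A → Fm A
  | .atom s => .atom s
  | .and F G => .and (F.nf c) (G.nf c)
  | .or F G => .or (F.nf c) (G.nf c)
  | .neg F => recursiveReduce c F
  | .grad (.atom s) G => gradDist s (G.nf c)
  | .grad F G => .grad F G

theorem UCE.nf_eq {F : Fm A} (h : UCE F) : F.nf c = F := by
  induction F with
  | atom => rfl
  | and F G ihF ihG => cases h with | and hF hG => rw [Fm.nf, ihF hF, ihG hG]
  | or F G ihF ihG => cases h with | or hF hG => rw [Fm.nf, ihF hF, ihG hG]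
  | neg => cases h
  | grad _ T _ ihT =>
    cases h with | chain s hT => rw [Fm.nf, ihT hT.uce, gradDist_of_unitTail s hT]

inductive NegResidual : Fm A → Prop where
  | atom (s : Atom A) : NegResidual (.atom s)
  | and {F G : Fm A} : NegResidual F → NegResidual G → NegResidual (.and F G)
  | or {F G : Fm A} : NegResidual F → NegResidual G → NegResidual (.or F G)
  | grad (s : Atom A) {F : Fm A} : NegResidual F → NegResidual (.grad (.atom s) F)
  | neg {F : Fm A} : UCE F → NegResidual (.neg F)

theorem NegResidual.step {F G : Fm A} (hF : NegResidual F) (hs : Step c F G) :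
    NegResidual G ∧ F.nf c = G.nf c := by
  induction hs with
  | negAtom => exact ⟨.atom _, rfl⟩
  | negAnd =>
    cases hF with | neg h => cases h with | and hF hG => exact ⟨.or (.neg hF) (.neg hG), rfl⟩
  | negOr =>
    cases hF with | neg h => cases h with | or hF hG => exact ⟨.and (.neg hF) (.neg hG), rfl⟩
  | negGrad s =>
    cases hF with
    | neg h => cases h with | chain _ hT => exact ⟨.or (.atom _) (.grad s (.neg hT.uce)), rfl⟩
  | gradAndR =>
    cases hF with
    | grad s h => cases h with | and hF hG => exact ⟨.and (.grad s hF) (.grad s hG), rfl⟩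
  | gradOrR =>
    cases hF with
    | grad s h => cases h with | or hF hG => exact ⟨.or (.grad s hF) (.grad s hG), rfl⟩
  | gradAssoc | gradAndL | gradOrL => cases hF
  | gradL _ hs => cases hF with | grad => cases hs
  | negC hs => cases hF with | neg hF => exact (hF.not_step hs).elim
  | andL _ _ ih =>
    cases hF with
    | and hF hG => obtain ⟨hF', e⟩ := ih hF; exact ⟨.and hF' hG, by rw [Fm.nf, Fm.nf, e]⟩
  | andR _ _ ih =>
    cases hF with
    | and hF hG => obtain ⟨hG', e⟩ := ih hG; exact ⟨.and hF hG', by rw [Fm.nf, Fm.nf, e]⟩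
  | orL _ _ ih =>
    cases hF with
    | or hF hG => obtain ⟨hF', e⟩ := ih hF; exact ⟨.or hF' hG, by rw [Fm.nf, Fm.nf, e]⟩
  | orR _ _ ih =>
    cases hF with
    | or hF hG => obtain ⟨hG', e⟩ := ih hG; exact ⟨.or hF hG', by rw [Fm.nf, Fm.nf, e]⟩
  | gradR _ _ ih =>
    cases hF with
    | grad s hG => obtain ⟨hG', e⟩ := ih hG; exact ⟨.grad s hG', by rw [Fm.nf, Fm.nf, e]⟩

theorem NegResidual.red {F G : Fm A} (hF : NegResidual F) (h : Red c F G) :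
    NegResidual G ∧ F.nf c = G.nf c := by
  induction h with
  | refl => exact ⟨hF, rfl⟩
  | tail _ hs ih =>
    obtain ⟨hG, e⟩ := ih
    obtain ⟨hH, e'⟩ := hG.step hs
    exact ⟨hH, e.trans e'⟩

theorem stmt9_general {A : Type} (c : A → A)
    {F : Fm A} (h : UCE F) :
    Red c (Fm.neg F) (recursiveReduce c F) ∧
    (∀ G : Fm A, Red c (Fm.neg F) G → UCE G → G = recursiveReduce c F) := by
  refine ⟨h.red_neg_recursiveReduce, fun G hred hG => ?_⟩
  have hnf : (Fm.neg F).nf c = G.nf c := ((NegResidual.neg h).red hred).2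
  rwa [hG.nf_eq, eq_comm] at hnf

/-- for F in unit chain expansion, ¬F reduces to recursiveReduce(F),
and recursiveReduce(F) is the unique unit-chain-expansion reduct of ¬F. -/
theorem stmt9 {A : Type} (c : A → A) (hc : Function.Involutive c)
    {F : Fm A} (h : UCE F) :
    Red c (Fm.neg F) (recursiveReduce c F) ∧
    (∀ G : Fm A, Red c (Fm.neg F) G → UCE G → G = recursiveReduce c F) :=
  stmt9_general c h
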